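/- There is a constant C > 0 such that for all sufficiently large n there exists a 4-edge-colouring of K_n with colours {1,2,3,4} containing no triangle whose three edges are coloured with the three colours 1, 2, 3 (one edge of each), such that every set of vertices on which at least one of the four colours is missing has size at most C·n^{1/3}·(log n)^2. In particular, h_4(n, c') = O(n^{1/3} (log n)^2), where c' is the rainbow triangle coloured with colours 1, 2, 3. -/

import Mathlib

/-- A set `X` is homogeneous for a 4-edge-colouring `c` of `K_n`
if some colour does not appear on pairs of distinct elements of `X`. -/
def IsHomog {n : ℕ} (c : Sym2 (Fin n) → Fin 4) (X : Finset (Fin n)) : Prop :=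
  ∃ i : Fin 4, ∀ x ∈ X, ∀ y ∈ X, x ≠ y → c s(x, y) ≠ i

/-- `c` contains a triangle whose three edges receive the three distinct
colours `0`, `1`, `2` (i.e. the first three of the four colours), one each. -/
def Has123Triangle {n : ℕ} (c : Sym2 (Fin n) → Fin 4) : Prop :=
  ∃ x y z : Fin n, x ≠ y ∧ y ≠ z ∧ x ≠ z ∧
    c s(x, y) ≠ c s(y, z) ∧ c s(y, z) ≠ c s(x, z) ∧ c s(x, y) ≠ c s(x, z) ∧
    (c s(x, y) : ℕ) < 3 ∧ (c s(y, z) : ℕ) < 3 ∧ (c s(x, z) : ℕ) < 3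

/-!
Embed the `n` vertices into a cube `W³` with `|W| ≈ 2 n^{1/3}` and color lexicographically:
pairs differing in the first coordinate get a color from a fixed 3-coloring `q` of `K_W`, placed
on the colors other than `0`; pairs first differing in the second or third coordinate likewise
avoid `1`, resp. `2`. A triangle of a lexicographic product with three distinct colors lies in a
single level, so it cannot use all of `0, 1, 2`.

Take `q` such that every set missing a color has size `O(log |W|)`; it exists by the union bound,
since a fixed `k`-set misses a fixed color with probability `(2/3)^(k choose 2)`. A set missing
color `j` projects, level by level, to such sets except at the one level (if any) avoiding `j`,
so its size is at most `|W| · O(log n)²`.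
-/

open Finset Fintype

section Counting

variable {V ι κ : Type*}

def MissesColor (c : Sym2 V → κ) (X : Finset V) (i : κ) : Prop :=
  ∀ x ∈ X, ∀ y ∈ X, x ≠ y → c s(x, y) ≠ i

instance [DecidableEq V] [DecidableEq κ] {c : Sym2 V → κ} {X : Finset V} {i : κ} :
    Decidable (MissesColor c X i) :=
  inferInstanceAs (Decidable (∀ x ∈ X, ∀ y ∈ X, x ≠ y → c s(x, y) ≠ i))

lemma MissesColor.mono {c : Sym2 V → κ} {X Y : Finset V} {i : κ} (h : MissesColor c Y i)
    (hXY : X ⊆ Y) : MissesColor c X i :=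
  fun x hx y hy => h x (hXY hx) y (hXY hy)

lemma missesColor_iff_forall_mem_image_offDiag [DecidableEq V] {c : Sym2 V → κ}
    {X : Finset V} {i : κ} :
    MissesColor c X i ↔ ∀ e ∈ X.offDiag.image Sym2.mk.uncurry, c e ≠ i := by
  simp only [MissesColor, forall_mem_image, Prod.forall, mem_offDiag, and_imp]
  exact ⟨fun h a b ha hb => h a ha b hb, fun h a ha b hb => h a b ha hb⟩

lemma card_filter_forall_mem_ne [Fintype ι] [DecidableEq ι] [Fintype κ] [DecidableEq κ]
    (T : Finset ι) (i : κ) :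
    #{f : ι → κ | ∀ e ∈ T, f e ≠ i} = (card κ - 1) ^ #T * card κ ^ (card ι - #T) := by
  have h : ({f : ι → κ | ∀ e ∈ T, f e ≠ i} : Finset _) =
      piFinset fun e => if e ∈ T then ({i}ᶜ : Finset κ) else univ := by
    ext f
    simp only [mem_filter, mem_univ, true_and, mem_piFinset]
    refine ⟨fun hf e => ?_, fun hf e he => by simpa [he] using hf e⟩
    split_ifs with he <;> simp [hf e, *]
  simp_rw [h, card_piFinset, apply_ite Finset.card]
  rw [prod_ite, prod_const, prod_const, card_compl, card_singleton,
    filter_mem_eq_inter, univ_inter, filter_not, filter_mem_eq_inter, univ_inter,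
    card_sdiff_of_subset (subset_univ T), card_univ, card_univ]

end Counting

section RandomColoring

variable {V : Type*} [Fintype V] [DecidableEq V]

lemma card_filter_missesColor_mul (S : Finset V) (i : Fin 3) :
    #{q : Sym2 V → Fin 3 | MissesColor q S i} * 3 ^ (#S).choose 2 =
      2 ^ (#S).choose 2 * 3 ^ card (Sym2 V) := by
  have hT : (#S).choose 2 ≤ card (Sym2 V) :=
    Sym2.card_image_offDiag S ▸ card_le_univ _
  simp_rw [missesColor_iff_forall_mem_image_offDiag]
  rw [card_filter_forall_mem_ne, Sym2.card_image_offDiag, Fintype.card_fin, mul_assoc,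
    ← pow_add, Nat.sub_add_cancel hT]

lemma card_filter_exists_missesColor_mul_le (k : ℕ) :
    #{q : Sym2 V → Fin 3 | ∃ S : Finset V, #S = k ∧ ∃ i, MissesColor q S i} * 3 ^ k.choose 2 ≤
      (card V).choose k * (3 * 2 ^ k.choose 2) * 3 ^ card (Sym2 V) := by
  have hsub : ({q : Sym2 V → Fin 3 | ∃ S : Finset V, #S = k ∧ ∃ i, MissesColor q S i} :
      Finset _) ⊆ (powersetCard k univ).biUnion fun S =>
        univ.biUnion fun i => {q : Sym2 V → Fin 3 | MissesColor q S i} := by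
    intro q
    simp only [mem_filter, mem_univ, true_and, mem_biUnion, mem_powersetCard, subset_univ]
    exact id
  calc _ ≤ (∑ S ∈ powersetCard k univ, ∑ i : Fin 3,
          #{q : Sym2 V → Fin 3 | MissesColor q S i}) * 3 ^ k.choose 2 := by
        gcongr
        exact (card_le_card hsub).trans
          (card_biUnion_le.trans (sum_le_sum fun _ _ => card_biUnion_le))
    _ = ∑ S ∈ powersetCard k univ, ∑ i : Fin 3, 2 ^ k.choose 2 * 3 ^ card (Sym2 V) := by
        rw [sum_mul]
        refine sum_congr rfl fun S hS => ?_
        rw [sum_mul]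
        refine sum_congr rfl fun i _ => ?_
        rw [← (mem_powersetCard.mp hS).2, card_filter_missesColor_mul]
    _ = _ := by simp [card_powersetCard, mul_assoc]

lemma choose_mul_lt_three_pow (N : ℕ) :
    N.choose (4 * Nat.log 2 N + 20) * (3 * 2 ^ (4 * Nat.log 2 N + 20).choose 2) <
      3 ^ (4 * Nat.log 2 N + 20).choose 2 := by
  set L := Nat.log 2 N
  set k := 4 * L + 20
  set u := (L + 5) * (4 * L + 19)
  have ht : k.choose 2 = 2 * u := by
    rw [Nat.choose_two_right, show k - 1 = 4 * L + 19 by omega,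
      show k * (4 * L + 19) = 2 * (2 * u) by ring]
    omega
  have hchoose : N.choose k ≤ 2 ^ ((L + 1) * k) :=
    calc N.choose k ≤ N ^ k := Nat.choose_le_pow N k
      _ ≤ (2 ^ (L + 1)) ^ k := Nat.pow_le_pow_left (Nat.lt_pow_succ_log_self one_lt_two N).le k
      _ = 2 ^ ((L + 1) * k) := (pow_mul 2 (L + 1) k).symm
  have hexp : (L + 1) * k + 2 + 2 * u ≤ 3 * u := by simp only [k, u]; nlinarith
  clear_value u
  calc N.choose k * (3 * 2 ^ k.choose 2) < 2 ^ ((L + 1) * k) * (2 ^ 2 * 2 ^ (2 * u)) := by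
        rw [ht]
        exact Nat.mul_lt_mul_of_le_of_lt hchoose
          (Nat.mul_lt_mul_of_pos_right (by norm_num) (by positivity)) (by positivity)
    _ ≤ 2 ^ (3 * u) := by
        rw [← pow_add, ← pow_add, ← add_assoc]
        exact Nat.pow_le_pow_right two_pos hexp
    _ = 8 ^ u := by rw [pow_mul]; norm_num
    _ ≤ 9 ^ u := Nat.pow_le_pow_left (by norm_num) u
    _ = 3 ^ k.choose 2 := by rw [ht, pow_mul]; norm_num

variable (V) in
theorem exists_coloring_missesColor_card_le :
    ∃ q : Sym2 V → Fin 3, ∀ X i, MissesColor q X i → #X ≤ 4 * Nat.log 2 (card V) + 19 := by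
  set k := 4 * Nat.log 2 (card V) + 20
  have hbad : #{q : Sym2 V → Fin 3 | ∃ S : Finset V, #S = k ∧ ∃ i, MissesColor q S i} <
      #(univ : Finset (Sym2 V → Fin 3)) := by
    rw [card_univ, Fintype.card_fun, Fintype.card_fin]
    refine lt_of_mul_lt_mul_right ((card_filter_exists_missesColor_mul_le k).trans_lt ?_)
      (Nat.zero_le (3 ^ k.choose 2))
    rw [mul_comm (3 ^ card (Sym2 V))]
    exact Nat.mul_lt_mul_of_pos_right (choose_mul_lt_three_pow _) (by positivity)
  obtain ⟨q, -, hq⟩ := exists_mem_notMem_of_card_lt_card hbad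
  refine ⟨q, fun X i hX => ?_⟩
  by_contra! hk
  obtain ⟨S, hSX, hS⟩ := exists_subset_card_eq (show k ≤ #X by omega)
  exact hq (mem_filter.mpr ⟨mem_univ q, S, hS, i, hX.mono hSX⟩)

end RandomColoring

section LexColoring

variable {α β V W κ : Type*}

def IsRainbowFree (c : Sym2 V → κ) (S : Set κ) : Prop :=
  ∀ ⦃x y z : V⦄, x ≠ y → y ≠ z → x ≠ z →
    c s(x, y) ≠ c s(y, z) → c s(y, z) ≠ c s(x, z) → c s(x, y) ≠ c s(x, z) →
    c s(x, y) ∈ S → c s(y, z) ∈ S → c s(x, z) ∈ S → False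

lemma IsRainbowFree.comp_map {c : Sym2 V → κ} {S : Set κ} (h : IsRainbowFree c S) {f : W → V}
    (hf : Function.Injective f) : IsRainbowFree (c ∘ Sym2.map f) S :=
  fun _ _ _ hxy hyz hxz => h (hf.ne hxy) (hf.ne hyz) (hf.ne hxz)

lemma MissesColor.map {c : Sym2 V → κ} {X : Finset W} {i : κ} {f : W ↪ V}
    (h : MissesColor (c ∘ Sym2.map f) X i) : MissesColor c (X.map f) i := by
  simp only [MissesColor, forall_mem_map]
  exact fun x hx y hy hxy => h x hx y hy (fun h => hxy (congrArg f h))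

variable [DecidableEq α]

def lexColoring (c₁ : Sym2 α → κ) (c₂ : Sym2 β → κ) : Sym2 (α × β) → κ :=
  Sym2.lift ⟨fun p q => if p.1 = q.1 then c₂ s(p.2, q.2) else c₁ s(p.1, q.1), fun p q => by
    simp only [eq_comm (a := p.1), Sym2.eq_swap]⟩

@[simp]
lemma lexColoring_mk (c₁ : Sym2 α → κ) (c₂ : Sym2 β → κ) (p q : α × β) :
    lexColoring c₁ c₂ s(p, q) = if p.1 = q.1 then c₂ s(p.2, q.2) else c₁ s(p.1, q.1) :=
  rfl

lemma IsRainbowFree.lexColoring {c₁ : Sym2 α → κ} {c₂ : Sym2 β → κ} {S : Set κ}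
    (h₁ : IsRainbowFree c₁ S) (h₂ : IsRainbowFree c₂ S) :
    IsRainbowFree (lexColoring c₁ c₂) S := by
  rintro ⟨a, b⟩ ⟨a', b'⟩ ⟨a'', b''⟩ hxy hyz hxz
  simp only [lexColoring_mk, ne_eq, Prod.mk.injEq] at *
  -- if exactly two of the vertices share a fibre, the third sees both in the same color
  split_ifs <;> grind [IsRainbowFree]

lemma card_le_mul_of_missesColor_lexColoring [DecidableEq β] {c₁ : Sym2 α → κ}
    {c₂ : Sym2 β → κ} {i : κ} {A B : ℕ} (h₁ : ∀ X, MissesColor c₁ X i → #X ≤ A)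
    (h₂ : ∀ Y, MissesColor c₂ Y i → #Y ≤ B) {Z : Finset (α × β)}
    (hZ : MissesColor (lexColoring c₁ c₂) Z i) : #Z ≤ A * B := by
  have hfst : MissesColor c₁ (Z.image Prod.fst) i := by
    simp only [MissesColor, forall_mem_image]
    intro p hp q hq hpq
    simpa [hpq] using hZ p hp q hq (ne_of_apply_ne Prod.fst hpq)
  have hfibre (a : α) : #{p ∈ Z | p.1 = a} ≤ B := by
    rw [← card_image_of_injOn (f := Prod.snd) fun p hp q hq h =>
      Prod.ext ((mem_filter.mp hp).2.trans (mem_filter.mp hq).2.symm) h]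
    refine h₂ _ ?_
    simp only [MissesColor, forall_mem_image, mem_filter, and_imp]
    rintro p hp rfl q hq hqp hpq
    simpa [hqp] using hZ p hp q hq (ne_of_apply_ne Prod.snd hpq)
  calc #Z ≤ B * #(Z.image Prod.fst) := card_le_mul_card_image Z B fun a _ => hfibre a
    _ ≤ B * A := Nat.mul_le_mul_left B (h₁ _ hfst)
    _ = A * B := Nat.mul_comm B A

end LexColoring

section CubeColoring

variable {V W : Type*}

lemma isRainbowFree_succAbove_comp {p : Fin 4} (hp : (p : ℕ) < 3) (q : Sym2 V → Fin 3) :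
    IsRainbowFree (p.succAbove ∘ q) {i | (i : ℕ) < 3} := by
  have three_colors : ∀ p u v w : Fin 4, (p : ℕ) < 3 → u ≠ v → v ≠ w → u ≠ w →
      (u : ℕ) < 3 → (v : ℕ) < 3 → (w : ℕ) < 3 → p = u ∨ p = v ∨ p = w := by
    decide
  intro x y z _ _ _ h₁ h₂ h₃ hxy hyz hxz
  rcases three_colors _ _ _ _ hp h₁ h₂ h₃ hxy hyz hxz with h | h | h <;>
    exact Fin.succAbove_ne _ _ h.symm

lemma card_le_of_missesColor_succAbove_comp [Fintype V] {n : ℕ} {q : Sym2 V → Fin n} {K : ℕ}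
    (hq : ∀ X j, MissesColor q X j → #X ≤ K) (p i : Fin (n + 1)) (X : Finset V)
    (hX : MissesColor (p.succAbove ∘ q) X i) : #X ≤ if i = p then card V else K := by
  split_ifs with hip
  · exact card_le_univ X
  · obtain ⟨j, rfl⟩ := Fin.exists_succAbove_eq hip
    exact hq X j fun x hx y hy hxy hqj => hX x hx y hy hxy (congrArg p.succAbove hqj)

variable [DecidableEq W]

def cubeColoring (q : Sym2 W → Fin 3) : Sym2 (W × W × W) → Fin 4 :=
  lexColoring (Fin.succAbove 0 ∘ q) (lexColoring (Fin.succAbove 1 ∘ q) (Fin.succAbove 2 ∘ q))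

lemma isRainbowFree_cubeColoring (q : Sym2 W → Fin 3) :
    IsRainbowFree (cubeColoring q) {i | (i : ℕ) < 3} :=
  (isRainbowFree_succAbove_comp (by decide) q).lexColoring
    ((isRainbowFree_succAbove_comp (by decide) q).lexColoring
      (isRainbowFree_succAbove_comp (by decide) q))

lemma card_le_of_missesColor_cubeColoring [Fintype W] {q : Sym2 W → Fin 3} {K : ℕ}
    (hq : ∀ X j, MissesColor q X j → #X ≤ K) (hK : K ≤ card W) {X : Finset (W × W × W)}
    {i : Fin 4} (hX : MissesColor (cubeColoring q) X i) : #X ≤ card W * (K * K) := by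
  have hlevel := card_le_of_missesColor_succAbove_comp hq
  refine (card_le_mul_of_missesColor_lexColoring (hlevel 0 i)
    (fun _ hY => card_le_mul_of_missesColor_lexColoring (hlevel 1 i) (hlevel 2 i) hY)
    hX).trans ?_
  -- each color is avoided by at most one level
  fin_cases i <;> simp <;> nlinarith

end CubeColoring

lemma not_has123Triangle_of_isRainbowFree {n : ℕ} {c : Sym2 (Fin n) → Fin 4}
    (h : IsRainbowFree c {i | (i : ℕ) < 3}) : ¬ Has123Triangle c :=
  fun ⟨_, _, _, h₁, h₂, h₃, h₄, h₅, h₆, h₇, h₈, h₉⟩ => h h₁ h₂ h₃ h₄ h₅ h₆ h₇ h₈ h₉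

theorem exists_coloring_card_le_of_le_cube (W : Type*) [Fintype W] [DecidableEq W] {n : ℕ}
    (hn : n ≤ card W ^ 3) (hW : 4 * Nat.log 2 (card W) + 19 ≤ card W) :
    ∃ c : Sym2 (Fin n) → Fin 4, ¬ Has123Triangle c ∧
      ∀ X, IsHomog c X → #X ≤ card W * (4 * Nat.log 2 (card W) + 19) ^ 2 := by
  obtain ⟨q, hq⟩ := exists_coloring_missesColor_card_le W
  obtain ⟨f⟩ := Function.Embedding.nonempty_of_card_le (α := Fin n) (β := W × W × W)
    (by simpa [pow_three] using hn)
  refine ⟨cubeColoring q ∘ Sym2.map f, ?_, ?_⟩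
  · exact not_has123Triangle_of_isRainbowFree ((isRainbowFree_cubeColoring q).comp_map f.injective)
  · rintro X ⟨i, hX⟩
    rw [← card_map f, sq]
    exact card_le_of_missesColor_cubeColoring hq hW (MissesColor.map hX)

lemma four_mul_add_nineteen_le_two_pow {p : ℕ} (hp : 6 ≤ p) : 4 * p + 19 ≤ 2 ^ p := by
  induction p, hp using Nat.le_induction with
  | base => norm_num
  | succ p _ ih => rw [pow_succ]; omega

lemma two_pow_log_div_three_le {n : ℕ} (hn : n ≠ 0) :
    ((2 ^ (Nat.log 2 n / 3 + 1) : ℕ) : ℝ) ≤ 2 * (n : ℝ) ^ ((1 : ℝ) / 3) := by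
  have hcube : (2 ^ (Nat.log 2 n / 3 + 1)) ^ 3 ≤ 8 * n :=
    calc (2 ^ (Nat.log 2 n / 3 + 1)) ^ 3 = 2 ^ (3 * (Nat.log 2 n / 3)) * 8 := by ring
      _ ≤ 2 ^ Nat.log 2 n * 8 := by gcongr; exacts [one_le_two, Nat.mul_div_le _ _]
      _ ≤ 8 * n := by rw [mul_comm]; exact Nat.mul_le_mul_left 8 (Nat.pow_log_le_self 2 hn)
  refine le_of_pow_le_pow_left₀ three_ne_zero (by positivity) ?_
  have hroot : ((n : ℝ) ^ ((1 : ℝ) / 3)) ^ 3 = n := by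
    rw [← Real.rpow_natCast, ← Real.rpow_mul (Nat.cast_nonneg n)]
    norm_num
  rw [mul_pow, hroot]
  exact_mod_cast (show _ ≤ 2 ^ 3 * n from hcube)

theorem stmt7 :
    ∃ C : ℝ, 0 < C ∧ ∃ N : ℕ, ∀ n : ℕ, N ≤ n →
      ∃ c : Sym2 (Fin n) → Fin 4, ¬ Has123Triangle c ∧
        ∀ X : Finset (Fin n), IsHomog c X →
          (X.card : ℝ) ≤ C * (n : ℝ) ^ ((1 : ℝ) / 3) * (Real.logb 2 n) ^ 2 := by
  refine ⟨1058, by norm_num, 2 ^ 15, fun n hn => ?_⟩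
  set L := Nat.log 2 n
  have hL : 15 ≤ L := Nat.le_log_of_pow_le one_lt_two hn
  have hlog : Nat.log 2 (2 ^ (L / 3 + 1)) = L / 3 + 1 := Nat.log_pow one_lt_two _
  have hcube : n ≤ (2 ^ (L / 3 + 1)) ^ 3 :=
    calc n ≤ 2 ^ (L + 1) := (Nat.lt_pow_succ_log_self one_lt_two n).le
      _ ≤ (2 ^ (L / 3 + 1)) ^ 3 := by
        rw [← pow_mul]; exact Nat.pow_le_pow_right two_pos (by omega)
  obtain ⟨c, hc, hX⟩ := exists_coloring_card_le_of_le_cube (Fin (2 ^ (L / 3 + 1))) (n := n)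
    (by simpa using hcube) (by simpa [hlog] using four_mul_add_nineteen_le_two_pow (by omega))
  refine ⟨c, hc, fun X hXh => ?_⟩
  have hK : ((4 * (L / 3 + 1) + 19 : ℕ) : ℝ) ≤ 23 * Real.logb 2 n :=
    calc ((4 * (L / 3 + 1) + 19 : ℕ) : ℝ) ≤ ((23 * L : ℕ) : ℝ) := by
          exact_mod_cast (by omega)
      _ ≤ 23 * Real.logb 2 n := by push_cast; gcongr; exact Real.natLog_le_logb n 2
  calc (#X : ℝ) ≤ ((2 ^ (L / 3 + 1) : ℕ) : ℝ) * ((4 * (L / 3 + 1) + 19 : ℕ) : ℝ) ^ 2 := by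
        exact_mod_cast (by simpa [hlog] using hX X hXh)
    _ ≤ (2 * (n : ℝ) ^ ((1 : ℝ) / 3)) * (23 * Real.logb 2 n) ^ 2 := by
        gcongr
        exact two_pow_log_div_three_le (by positivity)
    _ = 1058 * (n : ℝ) ^ ((1 : ℝ) / 3) * (Real.logb 2 n) ^ 2 := by ring
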